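/- arXiv:2510.02082 — 2 statements merged into one kernel-verified Lean document; each statement's English description precedes it below -/
import Mathlib

section
/- Let A, B, C be positive integers with B² = 4AC (discriminant D = 0), and let q(m,n) = A·m² + B·m·n + C·n². Then the series whose terms are 1/(q(x)·q(y)·q(x+y)), summed over all pairs (x,y) ∈ S, converges and its sum equals (1/24)·( B/(A·C) )³. (This is the paper's Theorem 7, formula (top5), for the topograph of q rooted at the standard-basis edge, with r₀ = A, t₀ = C, e₀ = B.) -/
/-- The binary quadratic form `q(m,n) = A m² + B m n + C n²`, with real values. -/
noncomputable def q (A B C : ℤ) (v : ℤ × ℤ) : ℝ :=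
  (A : ℝ) * (v.1 : ℝ) ^ 2 + (B : ℝ) * (v.1 : ℝ) * (v.2 : ℝ) + (C : ℝ) * (v.2 : ℝ) ^ 2

/-- Pairs of lattice vectors with nonnegative coordinates and determinant one. -/
def S : Set ((ℤ × ℤ) × (ℤ × ℤ)) :=
  {p | 0 ≤ p.1.1 ∧ 0 ≤ p.1.2 ∧ 0 ≤ p.2.1 ∧ 0 ≤ p.2.2 ∧
    p.1.1 * p.2.2 - p.1.2 * p.2.1 = 1}

/-!
Since `B² = 4AC`, the form is the square of the positive linear form `L(m, n) = √A m + √C n`.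
With `u = L x`, `v = L y` the summand is `1 / (u²v²(u + v)²) = F(u, v) - F(u, u + v) - F(u + v, v)`
for `F(u, v) = 1 / (3u³v³)`, because `(u + v)³ - u³ - v³ = 3uv(u + v)`. The pairs in `S` form a
binary tree rooted at the standard basis, the children of `(x, y)` being `(x, x + y)` and
`(x + y, y)` (the Stern–Brocot tree), so the sum over the first `n` levels telescopes to
`F(L(1, 0), L(0, 1))` minus the sum of `F` over level `n`. This remainder tends to `0`: since
`1 / (uv) = 1 / (u(u + v)) + 1 / ((u + v)v)`, the sum of `1 / (uv)` over every level is
`1 / (L(1, 0) L(0, 1))`, while its maximum over level `n` is `O(1 / n)`.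
-/

open Filter Topology Finset

theorem hasSum_of_tendsto_sum_of_nonneg {ι : Type*} {f : ι → ℝ} (hf : 0 ≤ f)
    {s : ℕ → Finset ι} (hs : Tendsto s atTop atTop) {a : ℝ}
    (h : Tendsto (fun n => ∑ i ∈ s n, f i) atTop (𝓝 a)) : HasSum f a := by
  obtain ⟨M, hM⟩ := h.bddAbove_range
  have hsum : Summable f := summable_of_sum_le hf fun u => by
    obtain ⟨n, hn⟩ := (hs.eventually (eventually_ge_atTop u)).exists
    exact (sum_le_sum_of_subset_of_nonneg hn fun i _ _ => hf i).trans (hM ⟨n, rfl⟩)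
  rw [← tendsto_nhds_unique (hsum.hasSum.comp hs) h]
  exact hsum.hasSum

namespace Topograph

section Tree

variable {M : Type*} [Add M]

def step : Bool → M × M → M × M
  | false, p => (p.1, p.1 + p.2)
  | true, p => (p.1 + p.2, p.2)

def node (r : M × M) : List Bool → M × M
  | [] => r
  | b :: w => step b (node r w)

theorem map_step {N F : Type*} [Add N] [FunLike F M N] [AddHomClass F M N] (f : F)
    (b : Bool) (p : M × M) : Prod.map f f (step b p) = step b (Prod.map f f p) := by
  cases b <;> simp [step]

theorem map_node {N F : Type*} [Add N] [FunLike F M N] [AddHomClass F M N] (f : F)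
    (r : M × M) (w : List Bool) : Prod.map f f (node r w) = node (Prod.map f f r) w := by
  induction w with
  | nil => rfl
  | cons b w ih => simp only [node, map_step, ih]

end Tree

section SternBrocot

def stdBasis : (ℤ × ℤ) × (ℤ × ℤ) := ((1, 0), (0, 1))

theorem fst_coord_sum_pos_of_mem_S {p : (ℤ × ℤ) × (ℤ × ℤ)} (hp : p ∈ S) :
    0 < p.1.1 + p.1.2 := by
  obtain ⟨hx1, hx2, -, -, hdet⟩ := hp
  by_contra h
  obtain ⟨h1, h2⟩ : p.1.1 = 0 ∧ p.1.2 = 0 := by omega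
  simp [h1, h2] at hdet

theorem snd_coord_sum_pos_of_mem_S {p : (ℤ × ℤ) × (ℤ × ℤ)} (hp : p ∈ S) :
    0 < p.2.1 + p.2.2 := by
  obtain ⟨-, -, hy1, hy2, hdet⟩ := hp
  by_contra h
  obtain ⟨h1, h2⟩ : p.2.1 = 0 ∧ p.2.2 = 0 := by omega
  simp [h1, h2] at hdet

theorem step_mem_S {p : (ℤ × ℤ) × (ℤ × ℤ)} (hp : p ∈ S) (b : Bool) : step b p ∈ S := by
  obtain ⟨h1, h2, h3, h4, hdet⟩ := hp
  cases b <;> refine ⟨?_, ?_, ?_, ?_, ?_⟩ <;> simp only [step, Prod.fst_add, Prod.snd_add] <;>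
    first | omega | linear_combination hdet

theorem node_mem_S (w : List Bool) : node stdBasis w ∈ S := by
  induction w with
  | nil => simp [node, stdBasis, S]
  | cons b w ih => exact step_mem_S ih b

theorem step_ne_stdBasis {p : (ℤ × ℤ) × (ℤ × ℤ)} (hp : p ∈ S) (b : Bool) :
    step b p ≠ stdBasis := by
  obtain ⟨h1, h2, h3, h4, -⟩ := hp
  cases b <;>
    simp only [step, stdBasis, ne_eq, Prod.ext_iff, Prod.fst_add, Prod.snd_add, not_and,
      and_imp] <;>
    omega

theorem step_eq_step_iff {p p' : (ℤ × ℤ) × (ℤ × ℤ)} (hp : p ∈ S) (hp' : p' ∈ S) (b b' : Bool) :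
    step b p = step b' p' ↔ b = b' ∧ p = p' := by
  refine ⟨fun h => ?_, fun ⟨rfl, rfl⟩ => rfl⟩
  have hx := fst_coord_sum_pos_of_mem_S hp
  have hx' := fst_coord_sum_pos_of_mem_S hp'
  have hy := snd_coord_sum_pos_of_mem_S hp
  have hy' := snd_coord_sum_pos_of_mem_S hp'
  obtain ⟨h1, h2, h3, h4, -⟩ := hp
  obtain ⟨h1', h2', h3', h4', -⟩ := hp'
  cases b <;> cases b' <;>
    simp only [step, Prod.ext_iff, Prod.fst_add, Prod.snd_add, true_and, false_and,
      Bool.false_eq_true, Bool.true_eq_false] at h ⊢ <;>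
    omega

theorem node_injective : Function.Injective (node stdBasis) := by
  intro w w' h
  induction w generalizing w' with
  | nil =>
    cases w' with
    | nil => rfl
    | cons b' w' => exact absurd h.symm (step_ne_stdBasis (node_mem_S w') b')
  | cons b w ih =>
    cases w' with
    | nil => exact absurd h (step_ne_stdBasis (node_mem_S w) b)
    | cons b' w' =>
      obtain ⟨rfl, hw⟩ := (step_eq_step_iff (node_mem_S w) (node_mem_S w') b b').1 h
      rw [ih hw]

theorem mem_S_cases {p : (ℤ × ℤ) × (ℤ × ℤ)} (hp : p ∈ S) :
    p = stdBasis ∨ p.1 ≤ p.2 ∨ p.2 ≤ p.1 := by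
  obtain ⟨hx1, hx2, hy1, hy2, hdet⟩ := hp
  simp only [Prod.le_def, stdBasis, Prod.ext_iff]
  rcases le_or_gt p.1.1 p.2.1 with h1 | h1
  · rcases le_or_gt p.1.2 p.2.2 with h2 | h2
    · exact .inr (.inl ⟨h1, h2⟩)
    · nlinarith
  · rcases le_or_gt p.2.2 p.1.2 with h2 | h2
    · exact .inr (.inr ⟨h1.le, h2⟩)
    · have : p.2.1 + p.1.2 ≤ 0 := by nlinarith
      have : p.1.1 * p.2.2 = 1 := by nlinarith
      have := Int.eq_one_or_neg_one_of_mul_eq_one' this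
      omega

theorem exists_node_eq {p : (ℤ × ℤ) × (ℤ × ℤ)} (hp : p ∈ S) : ∃ w, node stdBasis w = p := by
  have hx := fst_coord_sum_pos_of_mem_S hp
  have hy := snd_coord_sum_pos_of_mem_S hp
  rcases mem_S_cases hp with rfl | ⟨hle1, hle2⟩ | ⟨hle1, hle2⟩
  · exact ⟨[], rfl⟩
  · obtain ⟨h1, h2, h3, h4, hdet⟩ := hp
    obtain ⟨w, hw⟩ := exists_node_eq (p := (p.1, p.2 - p.1))
      ⟨h1, h2, by simpa using hle1, by simpa using hle2,
        by simp only [Prod.fst_sub, Prod.snd_sub]; linear_combination hdet⟩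
    exact ⟨false :: w, by simp [node, hw, step]⟩
  · obtain ⟨h1, h2, h3, h4, hdet⟩ := hp
    obtain ⟨w, hw⟩ := exists_node_eq (p := (p.1 - p.2, p.2))
      ⟨by simpa using hle1, by simpa using hle2, h3, h4,
        by simp only [Prod.fst_sub, Prod.snd_sub]; linear_combination hdet⟩
    exact ⟨true :: w, by simp [node, hw, step]⟩
termination_by (p.1.1 + p.1.2 + p.2.1 + p.2.2).toNat
decreasing_by all_goals simp only [Prod.fst_sub, Prod.snd_sub]; omega

noncomputable def nodeEquiv : List Bool ≃ S :=
  Equiv.ofBijective (fun w => ⟨node stdBasis w, node_mem_S w⟩)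
    ⟨fun _ _ h => node_injective (congrArg Subtype.val h),
      fun p => (exists_node_eq p.2).imp fun _ hw => Subtype.ext hw⟩

end SternBrocot

section Words

variable (α : Type*) [Fintype α] [DecidableEq α]

def words : ℕ → Finset (List α)
  | 0 => {[]}
  | n + 1 => (univ ×ˢ words n).image fun p => p.1 :: p.2

variable {α}

theorem mem_words {n : ℕ} {w : List α} : w ∈ words α n ↔ w.length = n := by
  induction n generalizing w with
  | zero => simp [words]
  | succ n ih => cases w <;> simp [words, ih]

theorem sum_words_succ {β : Type*} [AddCommMonoid β] (f : List α → β) (n : ℕ) :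
    ∑ w ∈ words α (n + 1), f w = ∑ w ∈ words α n, ∑ a, f (a :: w) := by
  rw [words, sum_image fun p _ q _ h => Prod.ext (List.cons.inj h).1 (List.cons.inj h).2,
    sum_product_right]

def wordsLT (n : ℕ) : Finset (List α) := (range n).biUnion (words α)

theorem mem_wordsLT {n : ℕ} {w : List α} : w ∈ wordsLT n ↔ w.length < n := by
  simp [wordsLT, mem_words]

theorem sum_wordsLT {β : Type*} [AddCommMonoid β] (f : List α → β) (n : ℕ) :
    ∑ w ∈ wordsLT n, f w = ∑ k ∈ range n, ∑ w ∈ words α k, f w :=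
  sum_biUnion fun _ _ _ _ hkl => disjoint_left.2 fun _ hk hl =>
    hkl ((mem_words.1 hk).symm.trans (mem_words.1 hl))

theorem tendsto_wordsLT : Tendsto (wordsLT (α := α)) atTop atTop :=
  tendsto_atTop_atTop.2 fun u => ⟨u.sup List.length + 1, fun _ hn _ hw =>
    mem_wordsLT.2 (Nat.lt_of_lt_of_le (Nat.lt_succ_of_le (le_sup hw)) hn)⟩

end Words

section Weights

noncomputable def edgeWeight (p : ℝ × ℝ) : ℝ := 1 / (p.1 * p.2)

noncomputable def vertexWeight (p : ℝ × ℝ) : ℝ := 1 / (p.1 ^ 2 * p.2 ^ 2 * (p.1 + p.2) ^ 2)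

theorem edgeWeight_eq_add_step {p : ℝ × ℝ} (h1 : 0 < p.1) (h2 : 0 < p.2) :
    edgeWeight p = edgeWeight (step false p) + edgeWeight (step true p) := by
  simp only [edgeWeight, step]
  field_simp
  ring

theorem vertexWeight_eq_sub_step {p : ℝ × ℝ} (h1 : 0 < p.1) (h2 : 0 < p.2) :
    vertexWeight p = edgeWeight p ^ 3 / 3 - edgeWeight (step false p) ^ 3 / 3 -
      edgeWeight (step true p) ^ 3 / 3 := by
  simp only [vertexWeight, edgeWeight, step]
  field_simp
  ring

theorem node_bounds {m : ℝ} (hm : 0 ≤ m) {r : ℝ × ℝ} (h1 : m ≤ r.1) (h2 : m ≤ r.2)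
    (w : List Bool) :
    m ≤ (node r w).1 ∧ m ≤ (node r w).2 ∧ (w.length + 2) * m ≤ (node r w).1 + (node r w).2 := by
  induction w with
  | nil => simp only [node, List.length_nil, CharP.cast_eq_zero]; exact ⟨h1, h2, by linarith⟩
  | cons b w ih =>
    obtain ⟨ih1, ih2, ih3⟩ := ih
    simp only [node, List.length_cons, Nat.cast_succ]
    cases b <;> simp only [step] <;> refine ⟨?_, ?_, ?_⟩ <;> linarith

theorem node_pos {r : ℝ × ℝ} (h1 : 0 < r.1) (h2 : 0 < r.2) (w : List Bool) :
    0 < (node r w).1 ∧ 0 < (node r w).2 := by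
  have hm : 0 < min r.1 r.2 := lt_min h1 h2
  obtain ⟨hu, hv, -⟩ := node_bounds hm.le (min_le_left _ _) (min_le_right _ _) w
  exact ⟨hm.trans_le hu, hm.trans_le hv⟩

theorem edgeWeight_node_le {m : ℝ} (hm : 0 < m) {r : ℝ × ℝ} (h1 : m ≤ r.1) (h2 : m ≤ r.2)
    (w : List Bool) : edgeWeight (node r w) ≤ 2 / ((w.length + 2) * m ^ 2) := by
  obtain ⟨hu, hv, hsum⟩ := node_bounds hm.le h1 h2 w
  have hprod : (w.length + 2) * m ^ 2 ≤ 2 * ((node r w).1 * (node r w).2) := by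
    nlinarith [mul_le_mul_of_nonneg_left hu (hm.le.trans hv),
      mul_le_mul_of_nonneg_left hv (hm.le.trans hu)]
  rw [edgeWeight, div_le_div_iff₀ (mul_pos (hm.trans_le hu) (hm.trans_le hv)) (by positivity)]
  linarith

end Weights

section LevelSums

variable {r : ℝ × ℝ}

theorem sum_words_edgeWeight_node (h1 : 0 < r.1) (h2 : 0 < r.2) (n : ℕ) :
    ∑ w ∈ words Bool n, edgeWeight (node r w) = edgeWeight r := by
  induction n with
  | zero => simp [words, node]
  | succ n ih =>
    rw [sum_words_succ, ← ih]
    refine sum_congr rfl fun w _ => ?_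
    obtain ⟨hu, hv⟩ := node_pos h1 h2 w
    rw [Fintype.sum_bool, add_comm, edgeWeight_eq_add_step hu hv]
    rfl

theorem sum_wordsLT_vertexWeight_node (h1 : 0 < r.1) (h2 : 0 < r.2) (n : ℕ) :
    ∑ w ∈ wordsLT n, vertexWeight (node r w) =
      edgeWeight r ^ 3 / 3 - ∑ w ∈ words Bool n, edgeWeight (node r w) ^ 3 / 3 := by
  have hlevel : ∀ k, ∑ w ∈ words Bool k, vertexWeight (node r w) =
      ∑ w ∈ words Bool k, edgeWeight (node r w) ^ 3 / 3 -
        ∑ w ∈ words Bool (k + 1), edgeWeight (node r w) ^ 3 / 3 := fun k => by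
    rw [sum_words_succ, ← sum_sub_distrib]
    refine sum_congr rfl fun w _ => ?_
    obtain ⟨hu, hv⟩ := node_pos h1 h2 w
    rw [Fintype.sum_bool, vertexWeight_eq_sub_step hu hv]
    simp only [node]
    ring
  rw [sum_wordsLT, sum_congr rfl fun k _ => hlevel k, sum_range_sub']
  simp [words, node]

theorem tendsto_sum_words_edgeWeight_cube (h1 : 0 < r.1) (h2 : 0 < r.2) :
    Tendsto (fun n => ∑ w ∈ words Bool n, edgeWeight (node r w) ^ 3 / 3) atTop (𝓝 0) := by
  set m := min r.1 r.2
  have hm : 0 < m := lt_min h1 h2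
  set ε : ℕ → ℝ := fun n => 2 / ((n + 2) * m ^ 2)
  have hε : Tendsto ε atTop (𝓝 0) :=
    tendsto_const_nhds.div_atTop
      ((tendsto_natCast_atTop_atTop.atTop_add tendsto_const_nhds).atTop_mul_const (by positivity))
  have hbound : ∀ n, ∑ w ∈ words Bool n, edgeWeight (node r w) ^ 3 / 3 ≤
      ε n ^ 2 * (edgeWeight r / 3) := fun n => by
    rw [← sum_words_edgeWeight_node h1 h2 n, sum_div, mul_sum]
    refine sum_le_sum fun w hw => ?_
    have he0 : 0 ≤ edgeWeight (node r w) := by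
      obtain ⟨hu, hv⟩ := node_pos h1 h2 w
      exact (one_div_pos.2 (mul_pos hu hv)).le
    have he : edgeWeight (node r w) ≤ ε n := by
      simpa [ε, mem_words.1 hw] using
        edgeWeight_node_le hm (min_le_left _ _) (min_le_right _ _) w
    calc edgeWeight (node r w) ^ 3 / 3
        = edgeWeight (node r w) ^ 2 * (edgeWeight (node r w) / 3) := by ring
      _ ≤ ε n ^ 2 * (edgeWeight (node r w) / 3) := by gcongr
  refine squeeze_zero (fun n => sum_nonneg fun w _ => ?_) hbound ?_
  · obtain ⟨hu, hv⟩ := node_pos h1 h2 w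
    unfold edgeWeight
    positivity
  · simpa using (hε.pow 2).mul_const (edgeWeight r / 3)

theorem hasSum_vertexWeight_node (h1 : 0 < r.1) (h2 : 0 < r.2) :
    HasSum (fun w => vertexWeight (node r w)) (edgeWeight r ^ 3 / 3) := by
  refine hasSum_of_tendsto_sum_of_nonneg (fun w => ?_) tendsto_wordsLT ?_
  · obtain ⟨hu, hv⟩ := node_pos h1 h2 w
    unfold vertexWeight
    positivity
  · simp_rw [sum_wordsLT_vertexWeight_node h1 h2]
    simpa using tendsto_const_nhds.sub (tendsto_sum_words_edgeWeight_cube h1 h2)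

end LevelSums

theorem hasSum_vertexWeight_map_S (L : ℤ × ℤ →+ ℝ) (h1 : 0 < L (1, 0)) (h2 : 0 < L (0, 1)) :
    HasSum (fun p : S => vertexWeight (Prod.map L L p.val))
      (edgeWeight (L (1, 0), L (0, 1)) ^ 3 / 3) := by
  rw [← nodeEquiv.hasSum_iff]
  have h := hasSum_vertexWeight_node (r := Prod.map L L stdBasis) h1 h2
  simp only [← map_node] at h
  exact h

def linearForm (a c : ℝ) : ℤ × ℤ →+ ℝ where
  toFun v := a * v.1 + c * v.2
  map_zero' := by simp
  map_add' x y := by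
    simp only [Prod.fst_add, Prod.snd_add, Int.cast_add]
    ring

theorem q_eq_sq_linearForm {A B C : ℤ} {a c : ℝ} (hA : (A : ℝ) = a ^ 2)
    (hB : (B : ℝ) = 2 * a * c) (hC : (C : ℝ) = c ^ 2) (v : ℤ × ℤ) :
    q A B C v = linearForm a c v ^ 2 := by
  rw [q, hA, hB, hC]
  simp only [linearForm, AddMonoidHom.coe_mk, ZeroHom.coe_mk]
  ring

end Topograph

open Topograph

theorem stmt_4 (A B C : ℤ) (hA : 0 < A) (hB : 0 < B) (hC : 0 < C)
    (hD : B ^ 2 = 4 * A * C) :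
    HasSum
      (fun p : S =>
        1 / (q A B C p.val.1 * q A B C p.val.2 * q A B C (p.val.1 + p.val.2)))
      ((1 / 24) * ((B : ℝ) / ((A : ℝ) * (C : ℝ))) ^ 3) := by
  obtain ⟨a, ha, hA'⟩ : ∃ a : ℝ, 0 < a ∧ (A : ℝ) = a ^ 2 :=
    ⟨√A, Real.sqrt_pos.2 (by exact_mod_cast hA), (Real.sq_sqrt (by positivity)).symm⟩
  obtain ⟨c, hc, hC'⟩ : ∃ c : ℝ, 0 < c ∧ (C : ℝ) = c ^ 2 :=
    ⟨√C, Real.sqrt_pos.2 (by exact_mod_cast hC), (Real.sq_sqrt (by positivity)).symm⟩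
  have hB' : (B : ℝ) = 2 * a * c := by
    refine (pow_left_inj₀ (by exact_mod_cast hB.le) (by positivity) two_ne_zero).1 ?_
    rw [mul_pow, mul_pow, ← hA', ← hC']
    exact_mod_cast hD
  have hL1 : linearForm a c (1, 0) = a := by simp [linearForm]
  have hL2 : linearForm a c (0, 1) = c := by simp [linearForm]
  have hS := hasSum_vertexWeight_map_S (linearForm a c) (by rwa [hL1]) (by rwa [hL2])
  rw [hL1, hL2] at hS
  convert hS using 1
  · ext p
    simp only [q_eq_sq_linearForm hA' hB' hC', vertexWeight, Prod.map, map_add]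
  · rw [hA', hB', hC', edgeWeight]
    field_simp
    ring
end

section
/- Let A, B, C be positive integers with B² = 4AC (discriminant D = 0), and let q(m,n) = A·m² + B·m·n + C·n². Then the series whose terms are 1/( e(x,y) · e(x,x+y) · e(y,x+y) ), summed over all pairs (x,y) ∈ S, converges and its sum equals (1/3)·(1/B)³. (This is the paper's Theorem 7, formula (top6), for the topograph of q rooted at the standard-basis edge, with root edge label e₀ = B.) -/
/-- The edge label `e(u,v) = q(u+v) − q(u) − q(v)` (twice the polar form of `q`). -/
noncomputable def eLab (A B C : ℤ) (u v : ℤ × ℤ) : ℝ :=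
  q A B C (u + v) - q A B C u - q A B C v

open Filter Topology Finset

def descend {M : Type*} [Add M] (u v : M) : List Bool → M × M
  | [] => (u, v)
  | true :: w => ((descend u v w).1, (descend u v w).1 + (descend u v w).2)
  | false :: w => ((descend u v w).1 + (descend u v w).2, (descend u v w).2)

theorem map_descend {M N F : Type*} [Add M] [Add N] [FunLike F M N] [AddHomClass F M N]
    (f : F) (u v : M) (w : List Bool) :
    descend (f u) (f v) w = Prod.map f f (descend u v w) := by
  induction w with
  | nil => rfl
  | cons b w ih => cases b <;> simp [descend, ih]

theorem descend_cons_cancel {M : Type*} [Add M] [IsCancelAdd M] {u v : M} {b : Bool}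
    {w w' : List Bool} (h : descend u v (b :: w) = descend u v (b :: w')) :
    descend u v w = descend u v w' := by
  cases b <;> simp only [descend, Prod.mk.injEq] at h <;> obtain ⟨h₁, h₂⟩ := h
  · rw [h₂] at h₁
    exact Prod.ext (add_right_cancel h₁) h₂
  · rw [h₁] at h₂
    exact Prod.ext h₁ (add_left_cancel h₂)

def words : ℕ → Finset (List Bool)
  | 0 => {[]}
  | n + 1 => (univ ×ˢ words n).image fun p => p.1 :: p.2

theorem mem_words {n : ℕ} {w : List Bool} : w ∈ words n ↔ w.length = n := by
  induction n generalizing w with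
  | zero => simp [words]
  | succ n ih => cases w <;> simp [words, ih]

theorem sum_words_succ {β : Type*} [AddCommMonoid β] (G : List Bool → β) (n : ℕ) :
    ∑ w ∈ words (n + 1), G w = ∑ w ∈ words n, (G (true :: w) + G (false :: w)) := by
  rw [words, sum_image (fun p _ q _ h => by simpa [Prod.ext_iff] using h), sum_product,
    sum_comm]
  simp only [Fintype.sum_bool]

theorem hasSum_sub_children {G : List Bool → ℝ} (hG : ∀ w, 0 ≤ G w)
    (hchildren : ∀ w, G (true :: w) + G (false :: w) ≤ G w)
    (hlevel : Tendsto (fun n => ∑ w ∈ words n, G w) atTop (𝓝 0)) :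
    HasSum (fun w => G w - G (true :: w) - G (false :: w)) (G []) := by
  set f := fun w => G w - G (true :: w) - G (false :: w)
  have hf : 0 ≤ f := fun w => by simp only [f, Pi.zero_apply]; linarith [hchildren w]
  set below : ℕ → Finset (List Bool) := fun N => (range N).biUnion words
  have sum_below (N : ℕ) : ∑ w ∈ below N, f w = G [] - ∑ w ∈ words N, G w := by
    have hdisj : (range N : Set ℕ).PairwiseDisjoint words := fun m _ n _ hmn =>
      disjoint_left.2 fun w hm hn => hmn ((mem_words.1 hm).symm.trans (mem_words.1 hn))
    rw [sum_biUnion hdisj]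
    have sum_words (n : ℕ) : ∑ w ∈ words n, f w =
        ∑ w ∈ words n, G w - ∑ w ∈ words (n + 1), G w := by
      rw [sum_words_succ, ← sum_sub_distrib]
      exact sum_congr rfl fun w _ => by simp only [f]; ring
    simp only [sum_words, sum_range_sub']
    simp [words]
  have hbound (N : ℕ) : ∑ w ∈ below N, f w ≤ G [] := by
    rw [sum_below]
    linarith [sum_nonneg fun w (_ : w ∈ words N) => hG w]
  have hexhaust : Tendsto below atTop atTop := by
    refine tendsto_atTop_finset_of_monotone (fun M N hMN => biUnion_subset_biUnion_of_subset_left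
      _ (range_subset_range.2 hMN)) fun w => ⟨w.length + 1, ?_⟩
    simp [below, mem_words]
  have hsumm : Summable f := summable_of_sum_le hf fun s => by
    obtain ⟨N, hN⟩ := (hexhaust.eventually (eventually_ge_atTop s)).exists
    exact (sum_le_sum_of_subset_of_nonneg hN fun w _ _ => hf w).trans (hbound N)
  have hlim : Tendsto (fun N => ∑ w ∈ below N, f w) atTop (𝓝 (G [])) := by
    simpa [sum_below] using hlevel.const_sub (G [])
  have htsum : ∑' w, f w = G [] := tendsto_nhds_unique (hsumm.hasSum.comp hexhaust) hlim
  exact htsum ▸ hsumm.hasSum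

section Real

variable {x y : ℝ}

theorem one_le_descend (hx : 1 ≤ x) (hy : 1 ≤ y) (w : List Bool) :
    1 ≤ (descend x y w).1 ∧ 1 ≤ (descend x y w).2 := by
  induction w with
  | nil => exact ⟨hx, hy⟩
  | cons b w ih => cases b <;> simp only [descend] <;> constructor <;> linarith [ih.1, ih.2]

theorem length_add_two_le_descend (hx : 1 ≤ x) (hy : 1 ≤ y) (w : List Bool) :
    (w.length : ℝ) + 2 ≤ (descend x y w).1 + (descend x y w).2 := by
  induction w with
  | nil => simp only [descend, List.length_nil, Nat.cast_zero]; linarith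
  | cons b w ih =>
    have h := one_le_descend hx hy w
    cases b <;> simp only [descend, List.length_cons] <;> push_cast <;> linarith [h.1, h.2]

/-- Mass conservation: `1/(a b) = 1/(a (a+b)) + 1/((a+b) b)`. -/
theorem sum_words_one_div_descend (hx : 1 ≤ x) (hy : 1 ≤ y) (n : ℕ) :
    ∑ w ∈ words n, 1 / ((descend x y w).1 * (descend x y w).2) = 1 / (x * y) := by
  induction n with
  | zero => simp [words, descend]
  | succ n ih =>
    rw [sum_words_succ, ← ih]
    refine sum_congr rfl fun w _ => ?_
    obtain ⟨ha, hb⟩ := one_le_descend hx hy w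
    simp only [descend]
    field_simp
    ring

theorem tendsto_sum_words_one_div_descend_cube (hx : 1 ≤ x) (hy : 1 ≤ y) :
    Tendsto (fun n => ∑ w ∈ words n, 1 / ((descend x y w).1 * (descend x y w).2) ^ 3)
      atTop (𝓝 0) := by
  have hbound (n : ℕ) : ∑ w ∈ words n, 1 / ((descend x y w).1 * (descend x y w).2) ^ 3 ≤
      2 / (x * y) * (1 / ((n : ℝ) + 1)) := by
    calc ∑ w ∈ words n, 1 / ((descend x y w).1 * (descend x y w).2) ^ 3
        ≤ ∑ w ∈ words n, 2 / ((n : ℝ) + 1) * (1 / ((descend x y w).1 * (descend x y w).2)) := by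
          refine sum_le_sum fun w hw => ?_
          obtain ⟨ha, hb⟩ := one_le_descend hx hy w
          have hlen := length_add_two_le_descend hx hy w
          rw [mem_words.1 hw] at hlen
          set a := (descend x y w).1
          set b := (descend x y w).2
          have hc : 1 ≤ a * b := one_le_mul_of_one_le_of_one_le ha hb
          have hab : (n : ℝ) + 1 ≤ 2 * (a * b) := by nlinarith
          have hc3 : (a * b) ^ 2 ≤ (a * b) ^ 3 := pow_le_pow_right₀ hc (by norm_num)
          rw [div_mul_div_comm, div_le_div_iff₀ (by positivity) (by positivity)]
          nlinarith [mul_le_mul_of_nonneg_right hab (by positivity : (0 : ℝ) ≤ a * b)]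
      _ = 2 / (x * y) * (1 / ((n : ℝ) + 1)) := by
          rw [← mul_sum, sum_words_one_div_descend hx hy]; ring
  refine squeeze_zero (fun n => sum_nonneg fun w _ => ?_) hbound ?_
  · obtain ⟨ha, hb⟩ := one_le_descend hx hy w
    positivity
  · simpa using tendsto_one_div_add_atTop_nhds_zero_nat.const_mul (2 / (x * y))

theorem hasSum_descend (hx : 1 ≤ x) (hy : 1 ≤ y) :
    HasSum (fun w => 3 / ((descend x y w).1 * (descend x y w).2 *
      ((descend x y w).1 + (descend x y w).2)) ^ 2) (1 / (x * y) ^ 3) := by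
  set G := fun w => 1 / ((descend x y w).1 * (descend x y w).2) ^ 3
  have telescope (w : List Bool) :
      G w - G (true :: w) - G (false :: w) = 3 / ((descend x y w).1 * (descend x y w).2 *
        ((descend x y w).1 + (descend x y w).2)) ^ 2 := by
    obtain ⟨ha, hb⟩ := one_le_descend hx hy w
    simp only [G, descend]
    field_simp
    ring
  have hG (w : List Bool) : 0 ≤ G w := by
    obtain ⟨ha, hb⟩ := one_le_descend hx hy w
    positivity
  have hchildren (w : List Bool) : G (true :: w) + G (false :: w) ≤ G w := by
    have : 0 ≤ 3 / ((descend x y w).1 * (descend x y w).2 *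
        ((descend x y w).1 + (descend x y w).2)) ^ 2 := by positivity
    linarith [telescope w]
  convert hasSum_sub_children hG hchildren (tendsto_sum_words_one_div_descend_cube hx hy) using 1
  · exact funext fun w => (telescope w).symm
  · rfl

end Real

theorem descend_mem_S {u v : ℤ × ℤ} (huv : (u, v) ∈ S) (w : List Bool) : descend u v w ∈ S := by
  induction w with
  | nil => exact huv
  | cons b w ih =>
    obtain ⟨h1, h2, h3, h4, hdet⟩ := ih
    cases b <;> refine ⟨?_, ?_, ?_, ?_, ?_⟩ <;> simp only [descend, Prod.fst_add, Prod.snd_add] <;>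
      first | omega | linear_combination hdet

theorem root_mem_S : (((1, 0), (0, 1)) : (ℤ × ℤ) × (ℤ × ℤ)) ∈ S := by
  simp [S]

theorem not_le_of_le_of_mem_S {p : (ℤ × ℤ) × (ℤ × ℤ)} (hp : p ∈ S) (hle : p.1 ≤ p.2) :
    ¬ p.2 ≤ p.1 := by
  intro hge
  obtain ⟨-, -, -, -, hdet⟩ := hp
  rw [le_antisymm hle hge] at hdet
  linarith

theorem eq_root_or_le_or_le_of_mem_S {p : (ℤ × ℤ) × (ℤ × ℤ)} (hp : p ∈ S) :
    p = ((1, 0), (0, 1)) ∨ p.1 ≤ p.2 ∨ p.2 ≤ p.1 := by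
  obtain ⟨⟨x₁, x₂⟩, ⟨y₁, y₂⟩⟩ := p
  obtain ⟨hx₁, hx₂, hy₁, hy₂, hdet⟩ := hp
  simp only [Prod.mk_le_mk, Prod.mk.injEq] at *
  by_contra! hne
  obtain ⟨hroot, hlt, hgt⟩ := hne
  rcases lt_or_ge y₁ x₁ with h₁ | h₁
  · have h₂ : x₂ < y₂ := hgt h₁.le
    obtain rfl : x₂ = 0 := by nlinarith
    obtain rfl : y₁ = 0 := by nlinarith
    have hxy : x₁ * y₂ = 1 := by linarith
    exact hroot ⟨Int.eq_one_of_mul_eq_one_right hx₁ hxy, rfl⟩ rfl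
      (Int.eq_one_of_mul_eq_one_left hy₂ hxy)
  · have h₂ : y₂ < x₂ := hlt h₁
    have h₃ : x₁ < y₁ := by by_contra! h; exact lt_asymm h₂ (hgt h)
    nlinarith

theorem exists_descend_eq_of_mem_S {p : (ℤ × ℤ) × (ℤ × ℤ)} (hp : p ∈ S) :
    ∃ w, descend ((1, 0) : ℤ × ℤ) (0, 1) w = p := by
  induction hn : (p.1.1 + p.1.2 + p.2.1 + p.2.2).toNat using Nat.strong_induction_on
    generalizing p with
  | _ n ih =>
    obtain ⟨⟨x₁, x₂⟩, ⟨y₁, y₂⟩⟩ := p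
    have hcomp := eq_root_or_le_or_le_of_mem_S hp
    obtain ⟨hx₁, hx₂, hy₁, hy₂, hdet⟩ := hp
    simp only [Prod.mk_le_mk] at hcomp hn hx₁ hx₂ hy₁ hy₂ hdet
    rcases hcomp with hroot | ⟨hle₁, hle₂⟩ | ⟨hge₁, hge₂⟩
    · exact ⟨[], hroot.symm⟩
    · have hx : 0 < x₁ + x₂ := by nlinarith
      obtain ⟨w, hw⟩ := ih _ (by dsimp only; omega) (p := ((x₁, x₂), (y₁ - x₁, y₂ - x₂)))
        ⟨hx₁, hx₂, by dsimp only; omega, by dsimp only; omega, by linear_combination hdet⟩ rfl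
      exact ⟨true :: w, by simp [descend, hw]⟩
    · have hy : 0 < y₁ + y₂ := by nlinarith
      obtain ⟨w, hw⟩ := ih _ (by dsimp only; omega) (p := ((x₁ - y₁, x₂ - y₂), (y₁, y₂)))
        ⟨by dsimp only; omega, by dsimp only; omega, hy₁, hy₂, by linear_combination hdet⟩ rfl
      exact ⟨false :: w, by simp [descend, hw]⟩

theorem fst_le_snd_descend_true {u v : ℤ × ℤ} (huv : (u, v) ∈ S) (w : List Bool) :
    (descend u v (true :: w)).1 ≤ (descend u v (true :: w)).2 := by
  obtain ⟨-, -, h₃, h₄, -⟩ := descend_mem_S huv w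
  simp only [descend, Prod.le_def, Prod.fst_add, Prod.snd_add]
  omega

theorem snd_le_fst_descend_false {u v : ℤ × ℤ} (huv : (u, v) ∈ S) (w : List Bool) :
    (descend u v (false :: w)).2 ≤ (descend u v (false :: w)).1 := by
  obtain ⟨h₁, h₂, -, -, -⟩ := descend_mem_S huv w
  simp only [descend, Prod.le_def, Prod.fst_add, Prod.snd_add]
  omega

theorem descend_cons_ne_root (b : Bool) (w : List Bool) :
    descend ((1, 0) : ℤ × ℤ) (0, 1) (b :: w) ≠ ((1, 0), (0, 1)) := by
  intro h
  cases b
  · have := snd_le_fst_descend_false root_mem_S w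
    simp [h, Prod.le_def] at this
  · have := fst_le_snd_descend_true root_mem_S w
    simp [h, Prod.le_def] at this

theorem descend_true_ne_descend_false (w w' : List Bool) :
    descend ((1, 0) : ℤ × ℤ) (0, 1) (true :: w) ≠ descend (1, 0) (0, 1) (false :: w') := by
  intro h
  have hle := fst_le_snd_descend_true root_mem_S w
  rw [h] at hle
  exact not_le_of_le_of_mem_S (descend_mem_S root_mem_S _) hle
    (snd_le_fst_descend_false root_mem_S w')

theorem descend_injective : Function.Injective (descend ((1, 0) : ℤ × ℤ) (0, 1)) := by
  intro w w' h
  induction w generalizing w' with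
  | nil =>
    cases w' with
    | nil => rfl
    | cons b w' => exact absurd h.symm (descend_cons_ne_root b w')
  | cons b w ih =>
    cases w' with
    | nil => exact absurd h (descend_cons_ne_root b w)
    | cons b' w' =>
      cases b <;> cases b'
      · rw [ih (descend_cons_cancel h)]
      · exact absurd h (descend_true_ne_descend_false w' w).symm
      · exact absurd h (descend_true_ne_descend_false w w')
      · rw [ih (descend_cons_cancel h)]

noncomputable def descendEquiv : List Bool ≃ S :=
  Equiv.ofBijective (fun w => ⟨descend (1, 0) (0, 1) w, descend_mem_S root_mem_S w⟩)
    ⟨fun _ _ h => descend_injective (congrArg Subtype.val h),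
      fun p => (exists_descend_eq_of_mem_S p.2).imp fun _ hw => Subtype.ext hw⟩

theorem coe_descendEquiv (w : List Bool) :
    (descendEquiv w : (ℤ × ℤ) × (ℤ × ℤ)) = descend (1, 0) (0, 1) w :=
  rfl

noncomputable def linFactor (A B : ℤ) : ℤ × ℤ →+ ℝ :=
  AddMonoidHom.mk' (fun v => 2 * A * v.1 + B * v.2) fun u v => by
    simp only [Prod.fst_add, Prod.snd_add]; push_cast; ring

theorem eLab_eq_linFactor_mul_div {A B C : ℤ} (hA : A ≠ 0) (hD : B ^ 2 = 4 * A * C) (u v : ℤ × ℤ) :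
    eLab A B C u v = linFactor A B u * linFactor A B v / (2 * A) := by
  have hD' : (B : ℝ) ^ 2 = 4 * A * C := by exact_mod_cast hD
  rw [eq_div_iff (by positivity)]
  simp only [eLab, q, linFactor, AddMonoidHom.mk'_apply, Prod.fst_add, Prod.snd_add]
  push_cast
  linear_combination (-(u.2 : ℝ) * v.2) * hD'

theorem stmt_5_general (A B C : ℤ) (hA : 0 < A) (hB : 0 < B)
    (hD : B ^ 2 = 4 * A * C) :
    HasSum
      (fun p : S =>
        1 / (eLab A B C p.val.1 p.val.2 * eLab A B C p.val.1 (p.val.1 + p.val.2) *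
          eLab A B C p.val.2 (p.val.1 + p.val.2)))
      ((1 / 3) * (1 / (B : ℝ)) ^ 3) := by
  have hL₁ : linFactor A B (1, 0) = 2 * A := by simp [linFactor]
  have hL₂ : linFactor A B (0, 1) = B := by simp [linFactor]
  have hx : (1 : ℝ) ≤ linFactor A B (1, 0) := by
    rw [hL₁]; linarith [(by exact_mod_cast hA : (1 : ℝ) ≤ A)]
  have hy : (1 : ℝ) ≤ linFactor A B (0, 1) := by rw [hL₂]; exact_mod_cast hB
  have hroot : (2 * A : ℝ) ^ 3 / 3 * (1 / (linFactor A B (1, 0) * linFactor A B (0, 1)) ^ 3) =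
      1 / 3 * (1 / B) ^ 3 := by
    rw [hL₁, hL₂]
    field_simp
  have key := (hasSum_descend hx hy).mul_left ((2 * A : ℝ) ^ 3 / 3)
  rw [hroot] at key
  rw [← descendEquiv.hasSum_iff]
  refine key.congr_fun fun w => ?_
  obtain ⟨ha, hb⟩ := one_le_descend hx hy w
  simp only [map_descend, Prod.map_fst, Prod.map_snd] at ha hb ⊢
  simp only [Function.comp_apply, coe_descendEquiv, eLab_eq_linFactor_mul_div hA.ne' hD, map_add]
  field_simp

theorem stmt_5 (A B C : ℤ) (hA : 0 < A) (hB : 0 < B) (hC : 0 < C)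
    (hD : B ^ 2 = 4 * A * C) :
    HasSum
      (fun p : S =>
        1 / (eLab A B C p.val.1 p.val.2 * eLab A B C p.val.1 (p.val.1 + p.val.2) *
          eLab A B C p.val.2 (p.val.1 + p.val.2)))
      ((1 / 3) * (1 / (B : ℝ)) ^ 3) :=
  stmt_5_general A B C hA hB hD
end
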